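/- (Characterization of pattern typings) For every environment Γ and linear pattern p: Γ ⊩ p : A holds if and only if dom(Γ) ⊆ fv(p) and for every subpattern q occurring in p, the projected multiset type A^p_q is defined and Γ|_q ⊩ q : A^p_q. -/

import Mathlib

/-! # The pair pattern calculus Λ_p and the type system P -/

/-- Patterns: p ::= x | ⟨p,q⟩ -/
inductive Pat : Type
  | var : ℕ → Pat
  | pair : Pat → Pat → Pat
  deriving DecidableEq

/-- Free variables of a pattern. -/
def Pat.fv : Pat → Finset ℕ
  | .var x => {x}
  | .pair p q => p.fv ∪ q.fv

/-- Linearity: every variable occurs at most once in the pattern. -/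
def Pat.Linear : Pat → Prop
  | .var _ => True
  | .pair p q => p.Linear ∧ q.Linear ∧ Disjoint p.fv q.fv

/-- Terms: t ::= x | λp.t | ⟨t,u⟩ | t u | t[p/u] | fail -/
inductive Tm : Type
  | var : ℕ → Tm
  | lam : Pat → Tm → Tm
  | pair : Tm → Tm → Tm
  | app : Tm → Tm → Tm
  | esub : Tm → Pat → Tm → Tm   -- explicit matching t[p/u]
  | fail : Tm
  deriving DecidableEq

/-- Free variables of a term. -/
def Tm.fv : Tm → Finset ℕ
  | .var x => {x}
  | .lam p t => t.fv \ p.fv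
  | .pair t u => t.fv ∪ u.fv
  | .app t u => t.fv ∪ u.fv
  | .esub t p u => (t.fv \ p.fv) ∪ u.fv
  | .fail => ∅

/-- Substitution of u for the free occurrences of x. -/
def Tm.subst (x : ℕ) (u : Tm) : Tm → Tm
  | .var y => if y = x then u else .var y
  | .lam p t => if x ∈ p.fv then .lam p t else .lam p (Tm.subst x u t)
  | .pair a b => .pair (Tm.subst x u a) (Tm.subst x u b)
  | .app a b => .app (Tm.subst x u a) (Tm.subst x u b)
  | .esub t p v => .esub (if x ∈ p.fv then t else Tm.subst x u t) p (Tm.subst x u v)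
  | .fail => .fail

/-- List contexts L ::= □ | L[p/t], represented as lists of explicit matchings
(head = outermost). -/
abbrev LCtx : Type := List (Pat × Tm)

/-- Plugging a term in a list context. -/
def LCtx.plug : LCtx → Tm → Tm
  | [], t => t
  | (p, u) :: L, t => .esub (LCtx.plug L t) p u

/-- Root reduction rules (r₁)–(r₉). -/
inductive Root : Tm → Tm → Prop
  | r1 (L : LCtx) (p t u) : Root (.app (L.plug (.lam p t)) u) (L.plug (.esub t p u))
  | r2 (t x u) : Root (.esub t (.var x) u) (Tm.subst x u t)
  | r3 (t p₁ p₂ L u₁ u₂) :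
      Root (.esub t (.pair p₁ p₂) (LCtx.plug L (.pair u₁ u₂)))
           (LCtx.plug L (.esub (.esub t p₁ u₁) p₂ u₂))
  | r4 (t p₁ p₂ L q u) : Root (.esub t (.pair p₁ p₂) (LCtx.plug L (.lam q u))) .fail
  | r5 (L : LCtx) (t u v) : Root (.app (L.plug (.pair t u)) v) .fail
  | r6 (t p₁ p₂) : Root (.esub t (.pair p₁ p₂) .fail) .fail
  | r7 (L : LCtx) : L ≠ [] → Root (L.plug .fail) .fail
  | r8 (t) : Root (.app .fail t) .fail
  | r9 (p) : Root (.lam p .fail) .fail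

/-- The reduction relation: contextual closure of the root rules. -/
inductive Step : Tm → Tm → Prop
  | root {t t'} : Root t t' → Step t t'
  | lam {t t'} (p) : Step t t' → Step (.lam p t) (.lam p t')
  | pairL {t t'} (u) : Step t t' → Step (.pair t u) (.pair t' u)
  | pairR {u u'} (t) : Step u u' → Step (.pair t u) (.pair t u')
  | appL {t t'} (u) : Step t t' → Step (.app t u) (.app t' u)
  | appR {u u'} (t) : Step u u' → Step (.app t u) (.app t u')
  | subL {t t'} (p u) : Step t t' → Step (.esub t p u) (.esub t' p u)
  | subR {u u'} (t p) : Step u u' → Step (.esub t p u) (.esub t p u')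

/-- Root rules without the substitution rule (r₂). -/
inductive RootA0 : Tm → Tm → Prop
  | r1 (L : LCtx) (p t u) : RootA0 (.app (L.plug (.lam p t)) u) (L.plug (.esub t p u))
  | r3 (t p₁ p₂ L u₁ u₂) :
      RootA0 (.esub t (.pair p₁ p₂) (LCtx.plug L (.pair u₁ u₂)))
             (LCtx.plug L (.esub (.esub t p₁ u₁) p₂ u₂))
  | r4 (t p₁ p₂ L q u) : RootA0 (.esub t (.pair p₁ p₂) (LCtx.plug L (.lam q u))) .fail
  | r5 (L : LCtx) (t u v) : RootA0 (.app (L.plug (.pair t u)) v) .fail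
  | r6 (t p₁ p₂) : RootA0 (.esub t (.pair p₁ p₂) .fail) .fail
  | r7 (L : LCtx) : L ≠ [] → RootA0 (L.plug .fail) .fail
  | r8 (t) : RootA0 (.app .fail t) .fail
  | r9 (p) : RootA0 (.lam p .fail) .fail

/-- Reduction without rule (r₂). -/
inductive StepA0 : Tm → Tm → Prop
  | root {t t'} : RootA0 t t' → StepA0 t t'
  | lam {t t'} (p) : StepA0 t t' → StepA0 (.lam p t) (.lam p t')
  | pairL {t t'} (u) : StepA0 t t' → StepA0 (.pair t u) (.pair t' u)
  | pairR {u u'} (t) : StepA0 u u' → StepA0 (.pair t u) (.pair t u')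
  | appL {t t'} (u) : StepA0 t t' → StepA0 (.app t u) (.app t' u)
  | appR {u u'} (t) : StepA0 u u' → StepA0 (.app t u) (.app t u')
  | subL {t t'} (p u) : StepA0 t t' → StepA0 (.esub t p u) (.esub t' p u)
  | subR {u u'} (t p) : StepA0 u u' → StepA0 (.esub t p u) (.esub t p u')

/-- Many-step reduction. -/
abbrev Steps : Tm → Tm → Prop := Relation.ReflTransGen Step

/-! ## Types and the type system P -/

/-- Types σ ::= α | ⟨A,B⟩ | A → σ, where multiset types A are represented
as lists of types. -/
inductive Ty : Type
  | base : ℕ → Ty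
  | prod : List Ty → List Ty → Ty
  | arr : List Ty → Ty → Ty

/-- Typing environments: functions from variables to multiset types. -/
def Env : Type := ℕ → List Ty

/-- Sum of environments (pointwise multiset union). -/
def Env.add (Γ Δ : Env) : Env := fun x => Γ x ++ Δ x

/-- Empty environment. -/
def Env.empty : Env := fun _ => []

/-- The environment x : A. -/
def Env.single (x : ℕ) (A : List Ty) : Env := fun y => if y = x then A else []

/-- Γ|_p : restriction of Γ to the free variables of p. -/
def Env.restrict (Γ : Env) (p : Pat) : Env := fun x => if x ∈ p.fv then Γ x else []

/-- Γ \ Γ|_p. -/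
def Env.erase (Γ : Env) (p : Pat) : Env := fun x => if x ∈ p.fv then [] else Γ x

/-- Pattern typing Γ ⊩ p : A. -/
inductive PatTy : Env → Pat → List Ty → Prop
  | var (x : ℕ) (A : List Ty) : PatTy (Env.single x A) (.var x) A
  | pair {Γ Δ p q A B} : PatTy Γ p A → PatTy Δ q B → Disjoint p.fv q.fv →
      PatTy (Γ.add Δ) (.pair p q) [Ty.prod A B]

mutual
  /-- Typing derivations Γ ⊢ t : σ of system P (rules ax, abs, app, pair, sub). -/
  inductive TDeriv : Env → Tm → Ty → Type
    | ax (x : ℕ) (σ : Ty) : TDeriv (Env.single x [σ]) (.var x) σ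
    | abs {Γ t σ p A} : TDeriv Γ t σ → PatTy (Γ.restrict p) p A →
        TDeriv (Γ.erase p) (.lam p t) (.arr A σ)
    | app {Γ Δ t u A σ} : TDeriv Γ t (.arr A σ) → MDeriv Δ u A →
        TDeriv (Γ.add Δ) (.app t u) σ
    | pair {Γ Δ t u A B} : MDeriv Γ t A → MDeriv Δ u B →
        TDeriv (Γ.add Δ) (.pair t u) (.prod A B)
    | esub {Γ Δ t σ p A u} : TDeriv Γ t σ → PatTy (Γ.restrict p) p A → MDeriv Δ u A →
        TDeriv ((Γ.erase p).add Δ) (.esub t p u) σ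
  /-- Multiset typing derivations Γ ⊢ t : A (the rule (many)). -/
  inductive MDeriv : Env → Tm → List Ty → Type
    | nil (t : Tm) : MDeriv Env.empty t []
    | cons {Γ Δ t σ A} : TDeriv Γ t σ → MDeriv Δ t A → MDeriv (Γ.add Δ) t (σ :: A)
end

mutual
  /-- The measure of a derivation: number of typing rules except (many). -/
  def measT : ∀ {Γ t σ}, TDeriv Γ t σ → ℕ
    | _, _, _, .ax _ _ => 1
    | _, _, _, .abs d _ => measT d + 1
    | _, _, _, .app d m => measT d + measM m + 1
    | _, _, _, .pair m n => measM m + measM n + 1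
    | _, _, _, .esub d _ m => measT d + measM m + 1
  def measM : ∀ {Γ t A}, MDeriv Γ t A → ℕ
    | _, _, _, .nil _ => 0
    | _, _, _, .cons d m => measT d + measM m
end

/-- Term contexts with a single hole. -/
inductive TmCtx : Type
  | hole : TmCtx
  | lam : Pat → TmCtx → TmCtx
  | pairL : TmCtx → Tm → TmCtx
  | pairR : Tm → TmCtx → TmCtx
  | appL : TmCtx → Tm → TmCtx
  | appR : Tm → TmCtx → TmCtx
  | subL : TmCtx → Pat → Tm → TmCtx
  | subR : Tm → Pat → TmCtx → TmCtx

/-- Plugging a term in a term context. -/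
def TmCtx.plug : TmCtx → Tm → Tm
  | .hole, t => t
  | .lam p C, t => .lam p (C.plug t)
  | .pairL C u, t => .pair (C.plug t) u
  | .pairR u C, t => .pair u (C.plug t)
  | .appL C u, t => .app (C.plug t) u
  | .appR u C, t => .app u (C.plug t)
  | .subL C p u, t => .esub (C.plug t) p u
  | .subR u p C, t => .esub u p (C.plug t)

mutual
  /-- Typed occurrences of a derivation. -/
  def tocT : ∀ {Γ t σ}, TDeriv Γ t σ → Set TmCtx
    | _, _, _, .ax _ _ => {TmCtx.hole}
    | _, _, _, @TDeriv.abs _ _ _ p _ d _ =>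
        {TmCtx.hole} ∪ (TmCtx.lam p) '' tocT d
    | _, _, _, @TDeriv.app _ _ t u _ _ d m =>
        {TmCtx.hole} ∪ (fun C => TmCtx.appL C u) '' tocT d ∪ (fun C => TmCtx.appR t C) '' tocM m
    | _, _, _, @TDeriv.pair _ _ t u _ _ m n =>
        {TmCtx.hole} ∪ (fun C => TmCtx.pairL C u) '' tocM m ∪ (fun C => TmCtx.pairR t C) '' tocM n
    | _, _, _, @TDeriv.esub _ _ t _ p _ u d _ m =>
        {TmCtx.hole} ∪ (fun C => TmCtx.subL C p u) '' tocT d ∪ (fun C => TmCtx.subR t p C) '' tocM m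
  def tocM : ∀ {Γ t A}, MDeriv Γ t A → Set TmCtx
    | _, _, _, .nil _ => ∅
    | _, _, _, .cons d m => tocT d ∪ tocM m
end

/-- Head contexts H ::= □ | λp.H | H t | H[p/t]. -/
inductive HCtx : Type
  | hole : HCtx
  | lam : Pat → HCtx → HCtx
  | app : HCtx → Tm → HCtx
  | esub : HCtx → Pat → Tm → HCtx

/-- Plugging a term in a head context. -/
def HCtx.plug : HCtx → Tm → Tm
  | .hole, t => t
  | .lam p H, t => .lam p (H.plug t)
  | .app H u, t => .app (H.plug t) u
  | .esub H p u, t => .esub (H.plug t) p u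

mutual
  /-- K-canonical forms: K ::= x | K t | K[⟨p,q⟩/K]. -/
  inductive IsK : Tm → Prop
    | var (x : ℕ) : IsK (.var x)
    | app {t} (u) : IsK t → IsK (.app t u)
    | esub {t u} (p q) : IsK t → IsK u → IsK (.esub t (.pair p q) u)
  /-- Canonical forms: J ::= λp.J | ⟨t,t⟩ | K | J[⟨p,q⟩/K]. -/
  inductive IsJ : Tm → Prop
    | lam {t} (p) : IsJ t → IsJ (.lam p t)
    | pair (t u : Tm) : IsJ (.pair t u)
    | ofK {t} : IsK t → IsJ t
    | esub {t u} (p q) : IsJ t → IsK u → IsJ (.esub t (.pair p q) u)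
end

/-- Pure K-canonical forms: K′ ::= x | K′ t. -/
inductive IsK' : Tm → Prop
  | var (x : ℕ) : IsK' (.var x)
  | app {t} (u) : IsK' t → IsK' (.app t u)

/-- Pure canonical forms: J′ ::= λp.J′ | ⟨t,t⟩ | K′ | J′[⟨p,q⟩/K′]. -/
inductive IsJ' : Tm → Prop
  | lam {t} (p) : IsJ' t → IsJ' (.lam p t)
  | pair (t u : Tm) : IsJ' (.pair t u)
  | ofK {t} : IsK' t → IsJ' t
  | esub {t u} (p q) : IsJ' t → IsK' u → IsJ' (.esub t (.pair p q) u)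

/-- A multiset type is inhabited if some closed term has it. -/
def MInhab (A : List Ty) : Prop := ∃ u : Tm, u.fv = ∅ ∧ Nonempty (MDeriv Env.empty u A)

/-- An environment is inhabited if all the multiset types it assigns are inhabited. -/
def EnvInhab (Γ : Env) : Prop := ∀ x, Γ x ≠ [] → MInhab (Γ x)

/-- C₁ → ⋯ → Cₙ → σ. -/
def mkArr : List (List Ty) → Ty → Ty
  | [], σ => σ
  | A :: Cs, σ => .arr A (mkArr Cs σ)

/-- A term is solvable if some head context closes it and sends it to a pair. -/
def Solvable (t : Tm) : Prop :=
  ∃ H : HCtx, (H.plug t).fv = ∅ ∧ ∃ u v : Tm, Steps (H.plug t) (.pair u v)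

/-- q occurs in p. -/
inductive Occ : Pat → Pat → Prop
  | refl (p : Pat) : Occ p p
  | left {r p q} : Occ r p → Occ r (.pair p q)
  | right {r p q} : Occ r q → Occ r (.pair p q)

/-- Proj A p q C means: the projected multiset type A^p_q is defined and equals C
(for q occurring in p). -/
inductive Proj : List Ty → Pat → Pat → List Ty → Prop
  | refl (A : List Ty) (p : Pat) : Proj A p p A
  | left {A B C : List Ty} {p₁ p₂ r} : Proj A p₁ r C →
      Proj [Ty.prod A B] (.pair p₁ p₂) r C
  | right {A B C : List Ty} {p₁ p₂ r} : Proj B p₂ r C →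
      Proj [Ty.prod A B] (.pair p₁ p₂) r C

/-! A derivation of `Γ ⊩ ⟨p₁,p₂⟩ : [⟨A,B⟩]` splits `Γ` into parts living on the disjoint sets
`fv p₁` and `fv p₂`, so restricting `Γ` to a subpattern of `pᵢ` recovers the restriction of the
`i`-th part, and induction on the derivation yields the typings of all subpatterns. Conversely,
the subpattern `p` itself has `A^p_p = A` and `Γ|_p = Γ` once `dom Γ ⊆ fv p`. -/

theorem Occ.fv_subset {q p : Pat} (h : Occ q p) : q.fv ⊆ p.fv := by
  induction h with
  | refl => exact subset_rfl
  | left _ ih => exact ih.trans Finset.subset_union_left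
  | right _ ih => exact ih.trans Finset.subset_union_right

theorem Occ.sizeOf_le {q p : Pat} (h : Occ q p) : sizeOf q ≤ sizeOf p := by
  induction h with
  | refl => exact le_rfl
  | left _ ih => simp only [Pat.pair.sizeOf_spec]; omega
  | right _ ih => simp only [Pat.pair.sizeOf_spec]; omega

theorem Proj.occ {A C : List Ty} {p q : Pat} (h : Proj A p q C) : Occ q p := by
  induction h with
  | refl => exact .refl _
  | left _ ih => exact ih.left
  | right _ ih => exact ih.right

theorem Proj.eq_of_self {A C : List Ty} {p : Pat} (h : Proj A p p C) : C = A := by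
  cases h with
  | refl => rfl
  | left h' => have := h'.occ.sizeOf_le; simp only [Pat.pair.sizeOf_spec] at this; omega
  | right h' => have := h'.occ.sizeOf_le; simp only [Pat.pair.sizeOf_spec] at this; omega

theorem Env.restrict_eq_self {Γ : Env} {p : Pat} (h : ∀ x, Γ x ≠ [] → x ∈ p.fv) :
    Γ.restrict p = Γ := by
  funext x
  by_cases hx : x ∈ p.fv
  · simp [Env.restrict, hx]
  · simpa [Env.restrict, hx, eq_comm] using mt (h x) hx

theorem Env.restrict_add_of_right {Γ Δ : Env} {r : Pat} (hΔ : ∀ x ∈ r.fv, Δ x = []) :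
    (Γ.add Δ).restrict r = Γ.restrict r := by
  funext x
  by_cases hx : x ∈ r.fv <;> simp [Env.restrict, Env.add, hx, hΔ]

theorem Env.restrict_add_of_left {Γ Δ : Env} {r : Pat} (hΓ : ∀ x ∈ r.fv, Γ x = []) :
    (Γ.add Δ).restrict r = Δ.restrict r := by
  funext x
  by_cases hx : x ∈ r.fv <;> simp [Env.restrict, Env.add, hx, hΓ]

theorem PatTy.dom_subset {Γ : Env} {p : Pat} {A : List Ty} (h : PatTy Γ p A) :
    ∀ x, Γ x ≠ [] → x ∈ p.fv := by
  induction h with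
  | var y B =>
    intro x hx
    have hxy : x = y := by
      by_contra hxy
      simp [Env.single, hxy] at hx
    simp [Pat.fv, hxy]
  | @pair Γ Δ _ _ _ _ _ _ _ ih₁ ih₂ =>
    intro x hx
    by_cases hΓx : Γ x = []
    · exact Finset.mem_union_right _ (ih₂ x (by simpa [Env.add, hΓx] using hx))
    · exact Finset.mem_union_left _ (ih₁ x hΓx)

theorem PatTy.eq_nil_of_notMem {Γ : Env} {p : Pat} {A : List Ty} (h : PatTy Γ p A) {x : ℕ}
    (hx : x ∉ p.fv) : Γ x = [] :=
  not_not.mp (mt (h.dom_subset x) hx)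

theorem PatTy.restrict_self {Γ : Env} {p : Pat} {A : List Ty} (h : PatTy Γ p A) :
    PatTy (Γ.restrict p) p A := by
  rwa [Env.restrict_eq_self h.dom_subset]

theorem PatTy.exists_proj {Γ : Env} {p : Pat} {A : List Ty} (h : PatTy Γ p A) :
    ∀ q, Occ q p → ∃ C, Proj A p q C ∧ PatTy (Γ.restrict q) q C := by
  induction h with
  | var x B =>
    rintro q ⟨⟩
    exact ⟨B, .refl _ _, (PatTy.var x B).restrict_self⟩
  | pair h₁ h₂ hd ih₁ ih₂ =>
    rintro r hr
    cases hr with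
    | refl => exact ⟨_, .refl _ _, (PatTy.pair h₁ h₂ hd).restrict_self⟩
    | left hr =>
      obtain ⟨C, hC, hty⟩ := ih₁ _ hr
      refine ⟨C, hC.left, ?_⟩
      rwa [Env.restrict_add_of_right fun x hx =>
        h₂.eq_nil_of_notMem (Finset.disjoint_left.mp hd (hr.fv_subset hx))]
    | right hr =>
      obtain ⟨C, hC, hty⟩ := ih₂ _ hr
      refine ⟨C, hC.right, ?_⟩
      rwa [Env.restrict_add_of_left fun x hx =>
        h₁.eq_nil_of_notMem (Finset.disjoint_right.mp hd (hr.fv_subset hx))]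

/-- Characterization of pattern typings: Γ ⊩ p : A iff
dom(Γ) ⊆ fv(p) and for every subpattern q occurring in p, A^p_q is defined and
Γ|_q ⊩ q : A^p_q. -/
theorem patTy_characterization {Γ : Env} {p : Pat} {A : List Ty} (hl : p.Linear) :
    PatTy Γ p A ↔
      ((∀ x, Γ x ≠ [] → x ∈ p.fv) ∧
        ∀ q, Occ q p → ∃ C, Proj A p q C ∧ PatTy (Γ.restrict q) q C) := by
  refine ⟨fun h => ⟨h.dom_subset, h.exists_proj⟩, ?_⟩
  rintro ⟨hdom, hsub⟩
  obtain ⟨C, hC, hty⟩ := hsub p (.refl p)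
  rwa [hC.eq_of_self, Env.restrict_eq_self hdom] at hty
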